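/- Define f(x,y) = h(xy)/(h(x)·y + h(y)·x) for (x,y) ∈ (0,1)². Then for all (x,y) ∈ (0,1)², f(x,y) ≥ 1/(2φ), with equality at (x,y) = (φ,φ). -/

import Mathlib

/-!
Here `φ` is Mathlib's golden ratio `(1 + √5) / 2`, the inverse of the `φ` of the statement, and
`binEntropy` is the binary entropy with natural logarithms, so `binEnt = binEntropy / log 2`.

With `m = √(xy)`, the function `u ↦ binEntropy (e⁻ᵘ) / e⁻ᵘ` is concave, which gives
`binEntropy x * y + binEntropy y * x ≤ 2 m binEntropy m`. It remains to show the one-variable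
inequality `φ m binEntropy m ≤ binEntropy (m²)` on `(0, 1)`, whose two sides touch at `m = φ⁻¹`.
Its difference is a combination of `log m`, `log (1 - m)`, `log (1 + m)` with nonnegative
coefficients; on each of seven subintervals these logarithms are replaced by cubic Taylor
polynomials around a well-chosen center, leaving a polynomial inequality.
-/

noncomputable def binEnt (x : ℝ) : ℝ :=
  -(x * Real.logb 2 x) - (1 - x) * Real.logb 2 (1 - x)

open Real Set
open scoped goldenRatio

/-- Unlike `Complex.logTaylor n`, this Taylor polynomial of `log (1 + t)` has degree `n`. -/
noncomputable def logTaylor (n : ℕ) (t : ℝ) : ℝ :=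
  ∑ k ∈ Finset.range n, (-1) ^ k * t ^ (k + 1) / (k + 1)

lemma hasDerivAt_logTaylor (n : ℕ) (t : ℝ) :
    HasDerivAt (logTaylor n) (∑ k ∈ Finset.range n, (-t) ^ k) t := by
  have h := HasDerivAt.fun_sum (u := Finset.range n)
    (A := fun k s => (-1 : ℝ) ^ k * s ^ (k + 1) / ((k : ℝ) + 1)) fun k _ =>
      ((hasDerivAt_pow (k + 1) t).const_mul ((-1) ^ k)).div_const ((k : ℝ) + 1)
  refine h.congr_deriv (Finset.sum_congr rfl fun k _ => ?_)
  rw [Nat.add_sub_cancel, neg_pow t]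
  push_cast
  field_simp

lemma hasDerivAt_logTaylor_sub_log (n : ℕ) {t : ℝ} (ht : -1 < t) :
    HasDerivAt (fun s => logTaylor n s - log (1 + s)) (-(-t) ^ n / (1 + t)) t := by
  have h1 : 1 + t ≠ 0 := by linarith
  have hlog : HasDerivAt (fun s => log (1 + s)) (1 / (1 + t)) t := by
    simpa using ((hasDerivAt_id t).const_add 1).log h1
  refine ((hasDerivAt_logTaylor n t).sub hlog).congr_deriv ?_
  rw [sub_eq_iff_eq_add, ← add_div, eq_div_iff h1]
  linear_combination -geom_sum_mul (-t) n

lemma log_one_add_le_logTaylor {n : ℕ} (hn : Odd n) {t : ℝ} (ht : -1 < t) :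
    log (1 + t) ≤ logTaylor n t := by
  set g := fun s => logTaylor n s - log (1 + s)
  have hg : ∀ s ∈ Ioi (-1 : ℝ), HasDerivAt g (s ^ n / (1 + s)) s := fun s hs => by
    simpa [hn.neg_pow] using hasDerivAt_logTaylor_sub_log n (mem_Ioi.mp hs)
  have hcont : ContinuousOn g (Ioi (-1)) := fun s hs => (hg s hs).continuousAt.continuousWithinAt
  have hg0 : g 0 = 0 := by simp [g, logTaylor]
  suffices 0 ≤ g t by simpa [g] using this
  rcases le_total 0 t with h | h
  · have hmono : MonotoneOn g (Ici 0) := by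
      refine monotoneOn_of_hasDerivWithinAt_nonneg (f' := fun s => s ^ n / (1 + s)) (convex_Ici 0)
        (hcont.mono (Ici_subset_Ioi.2 (by norm_num))) (fun s hs => ?_) fun s hs => ?_
      all_goals rw [interior_Ici] at hs
      · exact (hg s (Ioi_subset_Ioi (by norm_num) hs)).hasDerivWithinAt
      · have : 0 < s := hs; positivity
    simpa [hg0] using hmono self_mem_Ici h h
  · have hanti : AntitoneOn g (Ioc (-1) 0) := by
      refine antitoneOn_of_hasDerivWithinAt_nonpos (f' := fun s => s ^ n / (1 + s))
        (convex_Ioc (-1) 0) (hcont.mono Ioc_subset_Ioi_self) (fun s hs => ?_) fun s hs => ?_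
      all_goals rw [interior_Ioc] at hs
      · exact (hg s hs.1).hasDerivWithinAt
      · exact div_nonpos_of_nonpos_of_nonneg (hn.pow_nonpos hs.2.le) (by linarith [hs.1])
    simpa [hg0] using hanti ⟨ht, h⟩ ⟨by norm_num, le_rfl⟩ h

lemma logTaylor_le_log_one_add {n : ℕ} (hn : Even n) {t : ℝ} (ht : 0 ≤ t) :
    logTaylor n t ≤ log (1 + t) := by
  set g := fun s => logTaylor n s - log (1 + s)
  have hg : ∀ s ∈ Ici (0 : ℝ), HasDerivAt g (-(s ^ n / (1 + s))) s := fun s hs => by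
    simpa [hn.neg_pow, neg_div] using hasDerivAt_logTaylor_sub_log n (by simp at hs; linarith)
  have hanti : AntitoneOn g (Ici 0) := by
    refine antitoneOn_of_hasDerivWithinAt_nonpos (f' := fun s => -(s ^ n / (1 + s)))
      (convex_Ici 0) (fun s hs => (hg s hs).continuousAt.continuousWithinAt) (fun s hs => ?_)
      fun s hs => ?_
    all_goals rw [interior_Ici] at hs
    · exact (hg s (Ioi_subset_Ici_self hs)).hasDerivWithinAt
    · have : 0 < s := hs
      exact neg_nonpos.mpr (by positivity)
  have hg0 : g 0 = 0 := by simp [g, logTaylor]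
  simpa [hg0, g] using hanti self_mem_Ici ht ht

lemma logTaylor_three (t : ℝ) : logTaylor 3 t = t - t ^ 2 / 2 + t ^ 3 / 3 := by
  norm_num [logTaylor, Finset.sum_range_succ]; ring

lemma log_le_log_add_logTaylor {n : ℕ} (hn : Odd n) {x c u : ℝ} (hc : 0 < c) (hx : 0 < x)
    (hu : x = c * (1 + u)) : log x ≤ log c + logTaylor n u := by
  have h₁ : 0 < 1 + u := pos_of_mul_pos_right (hu ▸ hx) hc.le
  rw [hu, log_mul hc.ne' h₁.ne']
  linarith [log_one_add_le_logTaylor hn (by linarith : -1 < u)]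

lemma mul_log_two_le_neg_log {x : ℝ} {k : ℕ} (hx : 0 < x) (hxk : x ≤ (2 ^ k)⁻¹) :
    k * log 2 ≤ -log x := by
  have := log_le_log hx hxk
  rw [log_inv, log_pow] at this
  linarith

lemma goldenRatio_gt_d6 : 1.618033 < φ := by
  have : 2.236066 < √5 := (lt_sqrt (by norm_num)).2 (by norm_num)
  unfold goldenRatio; linarith

lemma goldenRatio_lt_d6 : φ < 1.618034 := by
  have : √5 < 2.236068 := (sqrt_lt' (by norm_num)).2 (by norm_num)
  unfold goldenRatio; linarith

lemma log_goldenRatio_gt : 0.4811 < log φ := by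
  have h₁ : log 1.618 < log φ := log_lt_log (by norm_num) (by linarith [goldenRatio_gt_d6])
  have h₂ : log (1.618 : ℝ) = log 2 - log (1 + 191 / 809) := by
    rw [← log_div (by norm_num) (by norm_num)]; norm_num
  have h₃ := log_one_add_le_logTaylor (n := 5) (by decide) (by norm_num : (-1 : ℝ) < 191 / 809)
  norm_num [logTaylor, Finset.sum_range_succ] at h₃
  linarith [log_two_gt_d9]

lemma monotoneOn_neg_log_one_sub_div : MonotoneOn (fun q => -log (1 - q) / q) (Ioo 0 1) := by
  intro p hp q hq hpq
  have hconc := strictConcaveOn_log_Ioi.concaveOn.2 (mem_Ioi.2 one_pos) (mem_Ioi.2 (sub_pos.2 hq.2))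
    (sub_nonneg.2 ((div_le_one hq.1).2 hpq)) (div_nonneg hp.1.le hq.1.le) (sub_add_cancel 1 (p / q))
  have hmid : (1 - p / q) • (1 : ℝ) + (p / q) • (1 - q) = 1 - p := by
    have : q ≠ 0 := hq.1.ne'
    simp only [smul_eq_mul]; field_simp; ring
  rw [hmid, smul_eq_mul, smul_eq_mul, log_one, mul_zero, zero_add] at hconc
  rw [div_mul_eq_mul_div, div_le_iff₀ hq.1] at hconc
  rw [div_le_div_iff₀ hp.1 hq.1]
  linarith

lemma hasDerivAt_exp_mul_binEntropy_exp_neg {u : ℝ} (hu : u ≠ 0) :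
    HasDerivAt (fun u => exp u * binEntropy (exp (-u))) (-log (1 - exp (-u)) / exp (-u)) u := by
  have hq₀ : exp (-u) ≠ 0 := (exp_pos _).ne'
  have hq₁ : exp (-u) ≠ 1 := by simpa using hu
  have h := (hasDerivAt_exp u).mul ((hasDerivAt_binEntropy hq₀ hq₁).comp u (hasDerivAt_neg u).exp)
  refine h.congr_deriv ?_
  rw [show exp u = (exp (-u))⁻¹ by rw [exp_neg, inv_inv]]
  simp only [Function.comp_apply, binEntropy, log_inv, log_exp]
  field_simp
  ring

lemma concaveOn_exp_mul_binEntropy_exp_neg :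
    ConcaveOn ℝ (Ioi 0) (fun u => exp u * binEntropy (exp (-u))) := by
  have hd : ∀ u ∈ Ioi (0 : ℝ), HasDerivAt (fun u => exp u * binEntropy (exp (-u)))
      (-log (1 - exp (-u)) / exp (-u)) u := fun u hu =>
    hasDerivAt_exp_mul_binEntropy_exp_neg (ne_of_gt hu)
  have hq : ∀ u ∈ Ioi (0 : ℝ), exp (-u) ∈ Ioo 0 1 := fun u hu =>
    ⟨exp_pos _, exp_lt_one_iff.2 (neg_lt_zero.2 hu)⟩
  refine AntitoneOn.concaveOn_of_deriv (convex_Ioi 0)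
    (fun u hu => (hd u hu).continuousAt.continuousWithinAt) ?_ ?_ <;> rw [interior_Ioi]
  · exact fun u hu => (hd u hu).differentiableAt.differentiableWithinAt
  · intro u hu v hv huv
    rw [(hd u hu).deriv, (hd v hv).deriv]
    exact monotoneOn_neg_log_one_sub_div (hq v hv) (hq u hu) (exp_le_exp.2 (neg_le_neg huv))

lemma binEntropy_mul_add_binEntropy_mul_le {x y : ℝ} (hx : x ∈ Ioo 0 1) (hy : y ∈ Ioo 0 1) :
    binEntropy x * y + binEntropy y * x ≤ 2 * √(x * y) * binEntropy √(x * y) := by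
  set m := √(x * y)
  have hxy : 0 < x * y := mul_pos hx.1 hy.1
  have hm : 0 < m := sqrt_pos.2 hxy
  have hmm : m * m = x * y := mul_self_sqrt hxy.le
  have hG : ∀ z, 0 < z → exp (-log z) * binEntropy (exp (-(-log z))) = binEntropy z / z := by
    intro z hz
    rw [neg_neg, exp_log hz, exp_neg, exp_log hz, inv_mul_eq_div]
  have hlog : (2 : ℝ)⁻¹ * -log x + 2⁻¹ * -log y = -log m := by
    rw [log_sqrt hxy.le, log_mul hx.1.ne' hy.1.ne']; ring
  have hmid := concaveOn_exp_mul_binEntropy_exp_neg.2 (mem_Ioi.2 (neg_pos.2 (log_neg hx.1 hx.2)))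
    (mem_Ioi.2 (neg_pos.2 (log_neg hy.1 hy.2))) (by norm_num : (0 : ℝ) ≤ 2⁻¹)
    (by norm_num : (0 : ℝ) ≤ 2⁻¹) (by norm_num)
  simp only [smul_eq_mul] at hmid
  rw [hlog, hG x hx.1, hG y hy.1, hG m hm] at hmid
  have hx₀ : x ≠ 0 := hx.1.ne'
  have hy₀ : y ≠ 0 := hy.1.ne'
  calc binEntropy x * y + binEntropy y * x
      = 2 * (2⁻¹ * (binEntropy x / x) + 2⁻¹ * (binEntropy y / y)) * (x * y) := by field_simp
    _ ≤ 2 * (binEntropy m / m) * (m * m) := by rw [hmm]; gcongr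
    _ = 2 * m * binEntropy m := by field_simp

noncomputable def entropyGap (x : ℝ) : ℝ := binEntropy (x * x) - φ * x * binEntropy x

lemma binEntropy_mul_self_sub {x : ℝ} (hx : x ∈ Ioo 0 1) (c : ℝ) :
    binEntropy (x * x) - c * x * binEntropy x =
      (2 - c) * x ^ 2 * -log x + (1 - x) * (1 - (c - 1) * x) * -log (1 - x)
        - (1 - x ^ 2) * log (1 + x) := by
  have h₁ : 1 - x * x = (1 - x) * (1 + x) := by ring
  simp only [binEntropy, log_inv]
  rw [log_mul hx.1.ne' hx.1.ne', h₁, log_mul (by linarith [hx.2]) (by linarith [hx.1])]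
  ring

lemma entropyGap_nonneg_of_log_bounds {x a b c : ℝ} (hx : x ∈ Ioo 0 1) (ha : a ≤ -log x)
    (hb : b ≤ -log (1 - x)) (hc : log (1 + x) ≤ c)
    (h : 0 ≤ (2 - φ) * x ^ 2 * a + (1 - x) * (1 - (φ - 1) * x) * b - (1 - x ^ 2) * c) :
    0 ≤ entropyGap x := by
  have h₁ : 0 ≤ (2 - φ) * x ^ 2 := by
    have := goldenRatio_lt_two; positivity
  have h₂ : 0 ≤ (1 - x) * (1 - (φ - 1) * x) := by
    refine mul_nonneg (by linarith [hx.2]) ?_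
    nlinarith [goldenRatio_lt_two, one_lt_goldenRatio, hx.1, hx.2]
  have h₃ : 0 ≤ 1 - x ^ 2 := by nlinarith [hx.1, hx.2]
  rw [entropyGap, binEntropy_mul_self_sub hx]
  linarith [mul_le_mul_of_nonneg_left ha h₁, mul_le_mul_of_nonneg_left hb h₂,
    mul_le_mul_of_nonneg_left hc h₃]

lemma entropyGap_nonneg_of_center {x c u v w a b d : ℝ} (hx : x ∈ Ioo 0 1) (hc : c ∈ Ioo 0 1)
    (hu : x = c * (1 + u)) (hv : 1 - x = (1 - c) * (1 + v)) (hw : 1 + x = (1 + c) * (1 + w))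
    (ha : a ≤ -log c) (hb : b ≤ -log (1 - c)) (hd : log (1 + c) ≤ d)
    (h : 0 ≤ (2 - φ) * x ^ 2 * (a - logTaylor 3 u)
      + (1 - x) * (1 - (φ - 1) * x) * (b - logTaylor 3 v)
      - (1 - x ^ 2) * (d + logTaylor 3 w)) : 0 ≤ entropyGap x := by
  have h3 : Odd 3 := by decide
  refine entropyGap_nonneg_of_log_bounds hx ?_ ?_ ?_ h
  · linarith [log_le_log_add_logTaylor h3 hc.1 hx.1 hu]
  · linarith [log_le_log_add_logTaylor h3 (sub_pos.2 hc.2) (sub_pos.2 hx.2) hv]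
  · linarith [log_le_log_add_logTaylor h3 (by linarith [hc.1]) (by linarith [hx.1]) hw]

lemma entropyGap_nonneg_near_zero {x : ℝ} (hx : 0 < x) (hx' : x ≤ 1 / 32) :
    0 ≤ entropyGap x := by
  refine entropyGap_nonneg_of_log_bounds (a := 5 * 0.6931471803) (b := -logTaylor 3 (-x))
    (c := logTaylor 3 x) ⟨hx, by linarith⟩ ?_ ?_
    (log_one_add_le_logTaylor (by decide) (by linarith)) ?_
  · have h := mul_log_two_le_neg_log (k := 5) hx (by norm_num [hx'])
    push_cast at h
    linarith [log_two_gt_d9]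
  · have := log_one_add_le_logTaylor (by decide : Odd 3) (by linarith : (-1 : ℝ) < -x)
    rw [← sub_eq_add_neg] at this
    linarith
  · simp only [logTaylor_three]
    have hx₂ := pow_nonneg hx.le 2
    have hx₃ := pow_nonneg hx.le 3
    nlinarith [goldenRatio_gt_d6, goldenRatio_lt_d6, mul_nonneg hx₂ (sub_nonneg.2 hx'),
      mul_nonneg hx₃ (sub_nonneg.2 hx'), mul_nonneg hx₃ (sub_nonneg.2 goldenRatio_gt_d6.le)]

lemma entropyGap_nonneg_around_one_eighth {x : ℝ} (h₁ : 1 / 32 ≤ x) (h₂ : x ≤ 1 / 4) :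
    0 ≤ entropyGap x := by
  have ha := mul_log_two_le_neg_log (k := 3) (by norm_num) le_rfl
  push_cast at ha
  have hb : logTaylor 4 (1 / 7) ≤ -log (1 - (2 ^ 3)⁻¹) := by
    rw [show (1 : ℝ) - (2 ^ 3)⁻¹ = (1 + 1 / 7)⁻¹ by norm_num, log_inv, neg_neg]
    exact logTaylor_le_log_one_add (by decide) (by norm_num)
  refine entropyGap_nonneg_of_center (c := (2 ^ 3)⁻¹) (u := 8 * x - 1) (v := (1 - 8 * x) / 7)
    (w := (8 * x - 1) / 9) (a := 3 * 0.6931471803) ⟨by linarith, by linarith⟩ (by norm_num)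
    (by ring) (by ring) (by ring) (by linarith [log_two_gt_d9]) hb
    (log_one_add_le_logTaylor (n := 5) (by decide) (by norm_num)) ?_
  norm_num [logTaylor, Finset.sum_range_succ]
  have hp := mul_nonneg (sub_nonneg.2 h₁) (sub_nonneg.2 h₂)
  nlinarith [goldenRatio_gt_d6, goldenRatio_lt_d6, hp, mul_nonneg hp (sub_nonneg.2 h₁),
    mul_nonneg hp (sub_nonneg.2 h₂), mul_nonneg hp (sub_nonneg.2 goldenRatio_gt_d6.le),
    mul_nonneg hp (sub_nonneg.2 goldenRatio_lt_d6.le), sq_nonneg (x - 1 / 8)]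

lemma entropyGap_nonneg_around_one_quarter {x : ℝ} (h₁ : 1 / 4 ≤ x) (h₂ : x ≤ 2 / 5) :
    0 ≤ entropyGap x := by
  have ha := mul_log_two_le_neg_log (k := 2) (by norm_num) le_rfl
  push_cast at ha
  have hb : logTaylor 4 (1 / 3) ≤ -log (1 - (2 ^ 2)⁻¹) := by
    rw [show (1 : ℝ) - (2 ^ 2)⁻¹ = (1 + 1 / 3)⁻¹ by norm_num, log_inv, neg_neg]
    exact logTaylor_le_log_one_add (by decide) (by norm_num)
  refine entropyGap_nonneg_of_center (c := (2 ^ 2)⁻¹) (u := 4 * x - 1) (v := (1 - 4 * x) / 3)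
    (w := (4 * x - 1) / 5) (a := 2 * 0.6931471803) ⟨by linarith, by linarith⟩ (by norm_num)
    (by ring) (by ring) (by ring) (by linarith [log_two_gt_d9]) hb
    (log_one_add_le_logTaylor (n := 5) (by decide) (by norm_num)) ?_
  norm_num [logTaylor, Finset.sum_range_succ]
  have hp := mul_nonneg (sub_nonneg.2 h₁) (sub_nonneg.2 h₂)
  nlinarith [goldenRatio_gt_d6, goldenRatio_lt_d6, hp, mul_nonneg hp (sub_nonneg.2 h₁),
    mul_nonneg hp (sub_nonneg.2 h₂), mul_nonneg hp (sub_nonneg.2 goldenRatio_gt_d6.le),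
    mul_nonneg hp (sub_nonneg.2 goldenRatio_lt_d6.le)]

lemma entropyGap_nonneg_around_two_fifths {x : ℝ} (h₁ : 2 / 5 ≤ x) (h₂ : x ≤ 1 / 2) :
    0 ≤ entropyGap x := by
  have ha : 0.6931471803 + logTaylor 4 (1 / 4) ≤ -log (2 / 5) := by
    rw [show (2 / 5 : ℝ) = (2 * (1 + 1 / 4))⁻¹ by norm_num, log_inv, neg_neg,
      log_mul (by norm_num) (by norm_num)]
    linarith [log_two_gt_d9,
      logTaylor_le_log_one_add (n := 4) (by decide) (by norm_num : (0 : ℝ) ≤ 1 / 4)]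
  have hb : 0.6931471803 - logTaylor 5 (1 / 5) ≤ -log (1 - 2 / 5) := by
    rw [show (1 - 2 / 5 : ℝ) = (1 + 1 / 5) / 2 by norm_num, log_div (by norm_num) (by norm_num)]
    linarith [log_two_gt_d9,
      log_one_add_le_logTaylor (n := 5) (by decide) (by norm_num : (-1 : ℝ) < 1 / 5)]
  refine entropyGap_nonneg_of_center (c := 2 / 5) (u := (5 * x - 2) / 2) (v := (2 - 5 * x) / 3)
    (w := (5 * x - 2) / 7) ⟨by linarith, by linarith⟩ (by norm_num)
    (by ring) (by ring) (by ring) ha hb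
    (log_one_add_le_logTaylor (n := 5) (by decide) (by norm_num)) ?_
  norm_num [logTaylor, Finset.sum_range_succ]
  have hp := mul_nonneg (sub_nonneg.2 h₁) (sub_nonneg.2 h₂)
  nlinarith [goldenRatio_gt_d6, goldenRatio_lt_d6, hp, mul_nonneg hp (sub_nonneg.2 h₁),
    mul_nonneg hp (sub_nonneg.2 h₂), mul_nonneg hp (sub_nonneg.2 goldenRatio_gt_d6.le),
    mul_nonneg hp (sub_nonneg.2 goldenRatio_lt_d6.le)]

lemma entropyGap_nonneg_around_inv_goldenRatio {x : ℝ} (h₁ : 1 / 2 ≤ x) (h₂ : x ≤ 9 / 10) :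
    0 ≤ entropyGap x := by
  have hφ : φ ^ 2 = φ + 1 := goldenRatio_sq
  have hinv : φ - 1 = φ⁻¹ := by rw [inv_goldenRatio, ← one_sub_goldenConj]; ring
  have ha : log φ ≤ -log (φ - 1) := by rw [hinv, log_inv, neg_neg]
  have hb : 2 * log φ ≤ -log (1 - (φ - 1)) := by
    rw [show 1 - (φ - 1) = (φ - 1) ^ 2 by linear_combination -hφ, hinv, log_pow, log_inv]
    push_cast; linarith
  have hd : log (1 + (φ - 1)) ≤ log φ := by rw [add_sub_cancel]
  refine entropyGap_nonneg_of_center (c := φ - 1) (u := φ * x - 1) (v := φ ^ 2 * (1 - x) - 1)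
    (w := (φ - 1) * (1 + x) - 1) ⟨by linarith, by linarith⟩
    ⟨by linarith [one_lt_goldenRatio], by linarith [goldenRatio_lt_two]⟩
    (by linear_combination (-x) * hφ) (by linear_combination (1 - x) * (φ - 1) * hφ)
    (by linear_combination (-(1 + x)) * hφ) ha hb hd ?_
  -- the certificate has a double zero at the equality point `x = φ - 1 = φ⁻¹`
  have hfactor : ∀ l, (2 - φ) * x ^ 2 * (l - logTaylor 3 (φ * x - 1))
      + (1 - x) * (1 - (φ - 1) * x) * (2 * l - logTaylor 3 (φ ^ 2 * (1 - x) - 1))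
      - (1 - x ^ 2) * (l + logTaylor 3 ((φ - 1) * (1 + x) - 1))
      = (x - φ + 1) ^ 2 * (l * φ ^ 2 + (8 / 3 - 11 / 3 * φ + (17 / 6 + 19 / 6 * φ) * x
          + (-14 / 3 - 17 / 6 * φ) * x ^ 2 + 2 * φ * x ^ 3)) := by
    intro l
    simp only [logTaylor_three]
    generalize φ = g at hφ ⊢
    linear_combination ((-35/6:ℝ) + (23/6)*g + (5/6)*g^2 - (1/3)*g^3 - (1/3)*g^4
      + (7/6)*x - (5/2)*x*g - (3/2)*x*g^2 + (1/6)*x*g^3 + (4/3)*x*g^4 + (1/3)*x*g^5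
      + 6*x^2 - (7/2)*x^2*g - (5/6)*x^2*g^2 + (7/6)*x^2*g^3 - 2*x^2*g^4 - (4/3)*x^2*g^5
      + (1/6)*x^3 + (11/3)*x^3*g + (19/6)*x^3*g^2 - (7/6)*x^3*g^3 + (4/3)*x^3*g^4
      + 2*x^3*g^5 - (13/6)*x^4 - (8/3)*x^4*g - 2*x^4*g^2 - (1/6)*x^4*g^3
      - (1/3)*x^4*g^4 - (4/3)*x^4*g^5 + (1/3)*x^5 + (2/3)*x^5*g + (2/3)*x^5*g^2
      + (1/3)*x^5*g^3 + (1/3)*x^5*g^5 - l + l*g - l*g^2 + 2*l*x*g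
      - l*x^2) * hφ
  rw [hfactor]
  refine mul_nonneg (sq_nonneg _) ?_
  have hp := mul_nonneg (sub_nonneg.2 h₁) (sub_nonneg.2 h₂)
  nlinarith [goldenRatio_gt_d6, goldenRatio_lt_d6, log_goldenRatio_gt,
    mul_le_mul_of_nonneg_right log_goldenRatio_gt.le (sq_nonneg φ), hp,
    mul_nonneg hp (sub_nonneg.2 goldenRatio_gt_d6.le)]

lemma entropyGap_nonneg_around_nineteen_twentieths {x : ℝ} (h₁ : 9 / 10 ≤ x)
    (h₂ : x ≤ 511 / 512) : 0 ≤ entropyGap x := by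
  have ha : -logTaylor 3 (-1 / 20) ≤ -log (19 / 20) := by
    rw [show (19 / 20 : ℝ) = 1 + -1 / 20 by norm_num]
    linarith [log_one_add_le_logTaylor (n := 3) (by decide) (by norm_num : (-1 : ℝ) < -1 / 20)]
  have hb : 4 * 0.6931471803 + logTaylor 4 (1 / 4) ≤ -log (1 - 19 / 20) := by
    rw [show (1 - 19 / 20 : ℝ) = (2 ^ 4 * (1 + 1 / 4))⁻¹ by norm_num, log_inv, neg_neg,
      log_mul (by norm_num) (by norm_num), log_pow]
    push_cast
    linarith [log_two_gt_d9,
      logTaylor_le_log_one_add (n := 4) (by decide) (by norm_num : (0 : ℝ) ≤ 1 / 4)]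
  have hd : log (1 + 19 / 20) ≤ 0.6931471808 + logTaylor 3 (-1 / 40) := by
    rw [show (1 + 19 / 20 : ℝ) = 2 * (1 + -1 / 40) by norm_num,
      log_mul (by norm_num) (by norm_num)]
    linarith [log_two_lt_d9,
      log_one_add_le_logTaylor (n := 3) (by decide) (by norm_num : (-1 : ℝ) < -1 / 40)]
  refine entropyGap_nonneg_of_center (c := 19 / 20) (u := (20 * x - 19) / 19) (v := 19 - 20 * x)
    (w := (20 * x - 19) / 39) ⟨by linarith, by linarith⟩ (by norm_num)
    (by ring) (by ring) (by ring) ha hb hd ?_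
  norm_num [logTaylor, Finset.sum_range_succ]
  have hp := mul_nonneg (sub_nonneg.2 h₁) (sub_nonneg.2 h₂)
  nlinarith [goldenRatio_gt_d6, goldenRatio_lt_d6, hp, mul_nonneg hp (sub_nonneg.2 h₁),
    mul_nonneg hp (sub_nonneg.2 h₂), mul_nonneg hp (sub_nonneg.2 goldenRatio_gt_d6.le),
    mul_nonneg hp (sub_nonneg.2 goldenRatio_lt_d6.le)]

lemma entropyGap_nonneg_near_one {x : ℝ} (hx : 511 / 512 ≤ x) (hx' : x < 1) :
    0 ≤ entropyGap x := by
  refine entropyGap_nonneg_of_log_bounds (a := 1 - x) (b := 9 * 0.6931471803)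
    (c := 0.6931471808) ⟨by linarith, hx'⟩ ?_ ?_ ?_ ?_
  · linarith [log_le_sub_one_of_pos (by linarith : 0 < x)]
  · have h := mul_log_two_le_neg_log (k := 9) (by linarith : 0 < 1 - x) (by linarith)
    push_cast at h
    linarith [log_two_gt_d9]
  · linarith [log_le_log (by linarith : 0 < 1 + x) (by linarith : 1 + x ≤ 2), log_two_lt_d9]
  · have h := mul_nonneg (sub_nonneg.2 hx) (sub_nonneg.2 hx'.le)
    nlinarith [goldenRatio_gt_d6, goldenRatio_lt_d6, h,
      mul_nonneg h (sub_nonneg.2 goldenRatio_gt_d6.le), sq_nonneg (1 - x)]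

lemma entropyGap_nonneg {x : ℝ} (hx : x ∈ Ioo 0 1) : 0 ≤ entropyGap x := by
  obtain ⟨h₀, h₁⟩ := hx
  rcases le_total x (1 / 32) with h | h
  · exact entropyGap_nonneg_near_zero h₀ h
  rcases le_total x (1 / 4) with h' | h'
  · exact entropyGap_nonneg_around_one_eighth h h'
  rcases le_total x (2 / 5) with h | h
  · exact entropyGap_nonneg_around_one_quarter h' h
  rcases le_total x (1 / 2) with h' | h'
  · exact entropyGap_nonneg_around_two_fifths h h'
  rcases le_total x (9 / 10) with h | h
  · exact entropyGap_nonneg_around_inv_goldenRatio h' h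
  rcases le_total x (511 / 512) with h' | h'
  · exact entropyGap_nonneg_around_nineteen_twentieths h h'
  · exact entropyGap_nonneg_near_one h' h₁

lemma goldenRatio_div_two_mul_le_binEntropy_mul {x y : ℝ} (hx : x ∈ Ioo 0 1) (hy : y ∈ Ioo 0 1) :
    φ / 2 * (binEntropy x * y + binEntropy y * x) ≤ binEntropy (x * y) := by
  set m := √(x * y)
  have hxy : 0 < x * y := mul_pos hx.1 hy.1
  have hmm : m * m = x * y := mul_self_sqrt hxy.le
  have hm : m ∈ Ioo 0 1 :=
    ⟨sqrt_pos.2 hxy, (sqrt_lt' one_pos).2 (by nlinarith [mul_pos (sub_pos.2 hx.2) hy.1, hy.2])⟩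
  have hgap := entropyGap_nonneg hm
  rw [entropyGap, hmm] at hgap
  calc φ / 2 * (binEntropy x * y + binEntropy y * x) ≤ φ / 2 * (2 * m * binEntropy m) :=
        mul_le_mul_of_nonneg_left (binEntropy_mul_add_binEntropy_mul_le hx hy)
          (div_nonneg goldenRatio_pos.le two_pos.le)
    _ ≤ binEntropy (x * y) := by linarith

lemma binEnt_eq_binEntropy_div (x : ℝ) : binEnt x = binEntropy x / log 2 := by
  simp only [binEnt, binEntropy, logb, log_inv]; ring

/-- The function `f(x,y) = h(xy)/(h(x)·y + h(y)·x)` on `(0,1)²` is everywhere at least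
`1/(2φ)`, with equality at `(φ, φ)`, where `φ = (√5-1)/2`. -/
theorem f_min :
    (∀ x ∈ Set.Ioo (0 : ℝ) 1, ∀ y ∈ Set.Ioo (0 : ℝ) 1,
      binEnt (x * y) / (binEnt x * y + binEnt y * x) ≥ 1 / (2 * ((Real.sqrt 5 - 1) / 2))) ∧
    binEnt (((Real.sqrt 5 - 1) / 2) * ((Real.sqrt 5 - 1) / 2)) /
        (binEnt ((Real.sqrt 5 - 1) / 2) * ((Real.sqrt 5 - 1) / 2) +
          binEnt ((Real.sqrt 5 - 1) / 2) * ((Real.sqrt 5 - 1) / 2)) =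
      1 / (2 * ((Real.sqrt 5 - 1) / 2)) := by
  have hratio : ∀ x y, binEnt (x * y) / (binEnt x * y + binEnt y * x)
      = binEntropy (x * y) / (binEntropy x * y + binEntropy y * x) := fun x y => by
    simp only [binEnt_eq_binEntropy_div, div_mul_eq_mul_div, ← add_div]
    exact div_div_div_cancel_right₀ (log_pos one_lt_two).ne' _ _
  have hinv : (√5 - 1) / 2 = φ⁻¹ := by rw [inv_goldenRatio]; ring
  have hinv_mem : φ⁻¹ ∈ Ioo 0 1 :=
    ⟨inv_pos.2 goldenRatio_pos, inv_lt_one_of_one_lt₀ one_lt_goldenRatio⟩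
  rw [hinv, show 1 / (2 * φ⁻¹) = φ / 2 by field_simp]
  refine ⟨fun x hx y hy => ?_, ?_⟩
  · have hpos : 0 < binEntropy x * y + binEntropy y * x := by
      have := binEntropy_pos hx.1 hx.2; have := binEntropy_pos hy.1 hy.2
      nlinarith [hx.1, hy.1]
    rw [hratio, ge_iff_le, le_div_iff₀ hpos]
    exact goldenRatio_div_two_mul_le_binEntropy_mul hx hy
  · have hsq : φ⁻¹ * φ⁻¹ = 1 - φ⁻¹ := by rw [inv_goldenRatio]; linear_combination goldenConj_sq
    have hH := binEntropy_pos hinv_mem.1 hinv_mem.2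
    rw [hratio, hsq, binEntropy_one_sub, div_eq_iff (by positivity)]
    linear_combination (-binEntropy φ⁻¹) * mul_inv_cancel₀ goldenRatio_ne_zero
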